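/- arXiv:1910.00656 — 2 statements merged into one kernel-verified Lean document; each statement's English description precedes it below -/
import Mathlib

section
/- For a prime power q and integers 1 ≤ k ≤ n, the number of edges in the Grassmann graph counted via shadows satisfies: for any nonempty set S of k-dimensional subspaces of (F_q)^n, the number of ordered pairs (A₁, A₂) with A₁ ∈ S, A₂ ∉ S, and dim(A₁ ∩ A₂) = k−1 is at most [k]_q·|S|·([n−k+1]_q − [k]_q·|S|/|∂S|), where ∂S is the set of (k−1)-dimensional subspaces contained in some member of S, and [m]_q = (q^m−1)/(q−1). -/
open Module Submodule

lemma card_ne_zero_eq {α : Type*} [Fintype α] [DecidableEq α] [Zero α] :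
    Fintype.card {x : α // x ≠ 0} = Fintype.card α - 1 := by
  have := Fintype.card_subtype_compl (p := fun x : α => x = 0)
  simpa [Fintype.card_subtype_eq] using this

variable {K W : Type*} [Field K] [Fintype K] [AddCommGroup W] [Module K W] [Finite W]

/-- number of 1-dim subspaces times (q-1) = q^m - 1 -/
theorem card_lines' : Nat.card {L : Submodule K W // finrank K L = 1} * (Fintype.card K - 1)
    = Fintype.card K ^ finrank K W - 1 := by
  classical
  cases nonempty_fintype W
  haveI : Module.Finite K W := Module.Finite.of_finite
  have key : ∀ v : {v : W // v ≠ 0}, finrank K (K ∙ v.1) = 1 := fun v => finrank_span_singleton v.2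
  let f : {v : W // v ≠ 0} → {L : Submodule K W // finrank K L = 1} :=
    fun v => ⟨K ∙ v.1, key v⟩
  have hfiber : ∀ L : {L : Submodule K W // finrank K L = 1},
      Nat.card {v : {v : W // v ≠ 0} // f v = L} = Fintype.card K - 1 := by
    intro L
    have e : {v : {v : W // v ≠ 0} // f v = L} ≃ {w : L.1 // w ≠ 0} :=
      { toFun := fun v => ⟨⟨v.1.1, by
          have : (K ∙ v.1.1) = L.1 := congrArg Subtype.val v.2
          exact this ▸ mem_span_singleton_self _⟩, by
          intro h
          exact v.1.2 (by simpa using congrArg Subtype.val h)⟩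
        invFun := fun w => ⟨⟨w.1.1, fun h => w.2 (Subtype.ext h)⟩, by
          apply Subtype.ext
          show (K ∙ w.1.1) = L.1
          apply Submodule.eq_of_le_of_finrank_le
          · rw [Submodule.span_singleton_le_iff_mem]; exact w.1.2
          · rw [L.2, finrank_span_singleton (fun h => w.2 (Subtype.ext h))]⟩
        left_inv := fun v => by ext; rfl
        right_inv := fun w => by ext; rfl }
    rw [Nat.card_congr e]
    have : Fintype.card L.1 = Fintype.card K := by
      rw [card_eq_pow_finrank (K := K) (V := L.1), L.2, pow_one]
    rw [Nat.card_eq_fintype_card, card_ne_zero_eq, this]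
  have htot : Nat.card {v : W // v ≠ 0} = Fintype.card K ^ finrank K W - 1 := by
    rw [Nat.card_eq_fintype_card, card_ne_zero_eq, card_eq_pow_finrank (K := K) (V := W)]
  calc Nat.card {L : Submodule K W // finrank K L = 1} * (Fintype.card K - 1)
      = ∑ L : {L : Submodule K W // finrank K L = 1}, Nat.card {v : {v : W // v ≠ 0} // f v = L} := by
        rw [Finset.sum_congr rfl (fun L _ => hfiber L)]
        simp [Nat.card_eq_fintype_card, mul_comm]
    _ = Nat.card {v : W // v ≠ 0} := by
        simp only [Nat.card_eq_fintype_card, ← Fintype.card_sigma]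
        exact Fintype.card_congr (Equiv.sigmaFiberEquiv f)
    _ = _ := htot


variable {K V : Type*} [Field K] [Fintype K] [AddCommGroup V] [Module K V] [Finite V]

-- rank-nullity for map under mkQ
lemma finrank_map_mkQ_add (B A : Submodule K V) (h : B ≤ A) :
    finrank K (A.map B.mkQ) + finrank K B = finrank K A := by
  haveI : Module.Finite K V := Module.Finite.of_finite
  haveI : FiniteDimensional K A := inferInstance
  have h1 := LinearMap.finrank_range_add_finrank_ker (B.mkQ.domRestrict A)
  rw [LinearMap.range_domRestrict, LinearMap.ker_domRestrict, Submodule.ker_mkQ] at h1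
  rwa [LinearEquiv.finrank_eq (Submodule.comapSubtypeEquivOfLe h)] at h1

/-- Count of k-dim spaces strictly between B (dim k-1) -/
theorem card_over (k : ℕ) (hk : 1 ≤ k) (hkV : k ≤ finrank K V) (B : Submodule K V) (hB : finrank K B = k - 1) :
    Nat.card {A : Submodule K V // B < A ∧ finrank K A = k} * (Fintype.card K - 1)
    = Fintype.card K ^ (finrank K V - k + 1) - 1 := by
  classical
  haveI : Module.Finite K V := Module.Finite.of_finite
  haveI : Finite (V ⧸ B) := Finite.of_surjective _ (Submodule.mkQ_surjective B)
  have frk_comap : ∀ L : Submodule K (V ⧸ B), finrank K (L.comap B.mkQ) = finrank K L + (k-1) := by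
    intro L
    have hle : B ≤ L.comap B.mkQ := by
      intro x hx; simp [Submodule.mem_comap, (Submodule.Quotient.mk_eq_zero B).mpr hx]
    have h1 := finrank_map_mkQ_add B (L.comap B.mkQ) hle
    rw [Submodule.map_comap_eq, Submodule.range_mkQ, top_inf_eq, hB] at h1
    omega
  have e : {A : Submodule K V // B < A ∧ finrank K A = k}
      ≃ {L : Submodule K (V ⧸ B) // finrank K L = 1} :=
    { toFun := fun A => ⟨A.1.map B.mkQ, by
        have h1 := finrank_map_mkQ_add B A.1 A.2.1.le
        rw [A.2.2, hB] at h1; omega⟩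
      invFun := fun L => ⟨L.1.comap B.mkQ, by
        have hle : B ≤ L.1.comap B.mkQ := by
          intro x hx; simp [Submodule.mem_comap, (Submodule.Quotient.mk_eq_zero B).mpr hx]
        have h2 := frk_comap L.1
        rw [L.2] at h2
        constructor
        · refine lt_of_le_of_ne hle fun hEq => ?_
          rw [← hEq] at h2; rw [hB] at h2; omega
        · omega⟩
      left_inv := fun A => Subtype.ext (by
        show (A.1.map B.mkQ).comap B.mkQ = A.1
        rw [Submodule.comap_map_eq, Submodule.ker_mkQ, sup_eq_left.mpr A.2.1.le])
      right_inv := fun L => Subtype.ext (by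
        show (L.1.comap B.mkQ).map B.mkQ = L.1
        rw [Submodule.map_comap_eq, Submodule.range_mkQ, top_inf_eq]) }
  rw [Nat.card_congr e, card_lines']
  congr 2
  have := Submodule.finrank_quotient_add_finrank B
  rw [hB] at this
  omega

section Hyp
variable {K W : Type*} [Field K] [Fintype K] [AddCommGroup W] [Module K W] [Finite W]

theorem card_hyperplanes' (hm : 1 ≤ finrank K W) :
    Nat.card {B : Submodule K W // finrank K B = finrank K W - 1} * (Fintype.card K - 1)
    = Fintype.card K ^ finrank K W - 1 := by
  classical
  haveI : Module.Finite K W := Module.Finite.of_finite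
  haveI : Finite (Module.Dual K W) :=
    Finite.of_injective (fun f : Module.Dual K W => (f : W → K)) LinearMap.coe_injective
  have hdual : finrank K (Module.Dual K W) = finrank K W := Subspace.dual_finrank_eq
  have frk_ann : ∀ B : Submodule K W, finrank K B.dualAnnihilator = finrank K W - finrank K B := by
    intro B
    have h := Subspace.finrank_add_finrank_dualCoannihilator_eq (V := W) B.dualAnnihilator
    rw [Subspace.dualAnnihilator_dualCoannihilator_eq] at h
    omega
  have frk_coann : ∀ L : Submodule K (Module.Dual K W),
      finrank K L.dualCoannihilator = finrank K W - finrank K L := by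
    intro L
    have h := Subspace.finrank_add_finrank_dualCoannihilator_eq (V := W) L
    omega
  have e : {B : Submodule K W // finrank K B = finrank K W - 1}
      ≃ {L : Submodule K (Module.Dual K W) // finrank K L = 1} :=
    { toFun := fun B => ⟨B.1.dualAnnihilator, by rw [frk_ann, B.2]; omega⟩
      invFun := fun L => ⟨L.1.dualCoannihilator, by rw [frk_coann, L.2]⟩
      left_inv := fun B => Subtype.ext Subspace.dualAnnihilator_dualCoannihilator_eq
      right_inv := fun L => Subtype.ext Subspace.dualCoannihilator_dualAnnihilator_eq }
  rw [Nat.card_congr e, card_lines', hdual]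

end Hyp

theorem card_under (k : ℕ) (hk : 1 ≤ k) (A : Submodule K V) (hA : finrank K A = k) :
    Nat.card {B : Submodule K V // B < A ∧ finrank K B = k - 1} * (Fintype.card K - 1)
    = Fintype.card K ^ k - 1 := by
  classical
  haveI : Module.Finite K V := Module.Finite.of_finite
  haveI : Finite A := inferInstance
  have frk_map : ∀ B' : Submodule K A, finrank K (B'.map A.subtype) = finrank K B' :=
    fun B' => Submodule.finrank_map_subtype_eq A B'
  have e : {B : Submodule K V // B < A ∧ finrank K B = k - 1}
      ≃ {B' : Submodule K A // finrank K B' = finrank K A - 1} :=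
    { toFun := fun B => ⟨B.1.comap A.subtype, by
        rw [LinearEquiv.finrank_eq (Submodule.comapSubtypeEquivOfLe B.2.1.le), B.2.2, hA]⟩
      invFun := fun B' => ⟨B'.1.map A.subtype, by
        have h1 : finrank K (B'.1.map A.subtype) = k - 1 := by
          rw [frk_map, B'.2, hA]
        constructor
        · refine lt_of_le_of_ne (Submodule.map_subtype_le A B'.1) fun hEq => ?_
          rw [hEq, hA] at h1; omega
        · rw [h1]⟩
      left_inv := fun B => Subtype.ext (by
        show (B.1.comap A.subtype).map A.subtype = B.1
        rw [Submodule.map_comap_subtype, inf_eq_right.mpr B.2.1.le])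
      right_inv := fun B' => Subtype.ext (by
        show (B'.1.map A.subtype).comap A.subtype = B'.1
        rw [Submodule.comap_map_eq, Submodule.ker_subtype, sup_bot_eq]) }
  rw [Nat.card_congr e, card_hyperplanes' (by rw [hA]; exact hk), hA]

lemma natCard_subtype {α : Type*} [Fintype α] (p : α → Prop) [DecidablePred p] :
    Nat.card {x // p x} = (Finset.univ.filter p).card := by
  rw [Nat.card_eq_fintype_card]
  exact Fintype.card_subtype p

lemma inf_eq_of_lt_lt {K V : Type*} [Field K] [AddCommGroup V] [Module K V] [Finite V]
    {k : ℕ} (hk : 1 ≤ k) {A₁ A₂ B : Submodule K V}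
    (h1 : finrank K A₁ = k) (h2 : finrank K A₂ = k) (hne : A₁ ≠ A₂)
    (hB : finrank K B = k - 1) (hB1 : B < A₁) (hB2 : B < A₂) : A₁ ⊓ A₂ = B := by
  haveI : Module.Finite K V := Module.Finite.of_finite
  by_contra hcon
  have hle : B ≤ A₁ ⊓ A₂ := le_inf hB1.le hB2.le
  have hlt : B < A₁ ⊓ A₂ := hle.lt_of_ne (fun h => hcon h.symm)
  have h3 : finrank K B < finrank K (A₁ ⊓ A₂ : Submodule K V) :=
    Submodule.finrank_lt_finrank_of_lt hlt
  rw [hB] at h3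
  have h4 : A₁ ⊓ A₂ = A₁ := Submodule.eq_of_le_of_finrank_le inf_le_left (by omega)
  have h5 : A₁ ≤ A₂ := h4 ▸ inf_le_right
  exact hne (Submodule.eq_of_le_of_finrank_le h5 (by omega))

/-- Shadow of a family S of k-dimensional subspaces: the (k-1)-dimensional
subspaces contained in some member of S. -/
def shadow (F : Type) [Field F] (n k : ℕ) (S : Set (Submodule F (Fin n → F))) :
    Set (Submodule F (Fin n → F)) :=
  {B | Module.finrank F B = k - 1 ∧ ∃ A ∈ S, B < A}

set_option maxHeartbeats 1000000 in
/-- Edge-count bound in the Grassmann graph: the number of ordered pairs (A₁,A₂)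
with A₁ ∈ S, A₂ ∉ S, dim(A₁ ∩ A₂) = k-1 is at most
[k]·|S|·([n-k+1] - [k]·|S|/|∂S|). -/

theorem edge_count_bound (F : Type) [Field F] [Fintype F] (n k : ℕ)
    (hk : 1 ≤ k) (hkn : k ≤ n)
    (S : Set (Submodule F (Fin n → F)))
    (hS : ∀ A ∈ S, Module.finrank F A = k) (hne : S.Nonempty) :
    let q : ℝ := Fintype.card F
    let bq : ℕ → ℝ := fun m => (q ^ m - 1) / (q - 1)
    (Nat.card {p : Submodule F (Fin n → F) × Submodule F (Fin n → F) |
        p.1 ∈ S ∧ Module.finrank F p.2 = k ∧ p.2 ∉ S ∧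
        Module.finrank F ↥(p.1 ⊓ p.2) = k - 1} : ℝ) ≤
      bq k * Nat.card S *
        (bq (n - k + 1) - bq k * Nat.card S / Nat.card (shadow F n k S)) := by
  classical
  intro q bq
  haveI : Finite (Submodule F (Fin n → F)) :=
    Finite.of_injective (fun A : Submodule F (Fin n → F) => (A : Set (Fin n → F)))
      SetLike.coe_injective
  haveI := Fintype.ofFinite (Submodule F (Fin n → F))
  haveI : Module.Finite F (Fin n → F) := Module.Finite.of_finite
  have hq2 : 2 ≤ Fintype.card F := Fintype.one_lt_card
  have hV : finrank F (Fin n → F) = n := Module.finrank_fin_fun F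
  have hbq : ∀ m : ℕ, bq m = ((Fintype.card F : ℝ) ^ m - 1) / ((Fintype.card F : ℝ) - 1) :=
    fun _ => rfl
  set 𝒮 : Finset (Submodule F (Fin n → F)) := Finset.univ.filter (· ∈ S) with h𝒮
  set 𝒟 : Finset (Submodule F (Fin n → F)) :=
    Finset.univ.filter (· ∈ shadow F n k S) with h𝒟
  have hmem𝒟 : ∀ B, B ∈ 𝒟 ↔ (finrank F B = k - 1 ∧ ∃ A ∈ S, B < A) := by
    intro B
    rw [h𝒟, Finset.mem_filter]
    constructor
    · rintro ⟨-, h⟩; exact h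
    · intro h; exact ⟨Finset.mem_univ _, h⟩
  have hmem𝒮 : ∀ A, A ∈ 𝒮 ↔ A ∈ S := by
    intro A; rw [h𝒮, Finset.mem_filter]; simp
  set dP : Submodule F (Fin n → F) → Finset (Submodule F (Fin n → F)) :=
    fun B => Finset.univ.filter (fun A => A ∈ S ∧ B < A) with hdP
  set eP : Submodule F (Fin n → F) → Finset (Submodule F (Fin n → F)) :=
    fun B => Finset.univ.filter (fun A => finrank F A = k ∧ A ∉ S ∧ B < A) with heP
  set cP : Submodule F (Fin n → F) → Finset (Submodule F (Fin n → F)) :=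
    fun A => Finset.univ.filter (fun B => B < A ∧ finrank F B = k - 1) with hcP
  have hc : ∀ A ∈ 𝒮, (cP A).card * (Fintype.card F - 1) = Fintype.card F ^ k - 1 := by
    intro A hA
    have h := card_under (K := F) (V := Fin n → F) k hk A (hS A ((hmem𝒮 A).mp hA))
    rwa [natCard_subtype] at h
  have hde : ∀ B ∈ 𝒟, ((dP B).card + (eP B).card) * (Fintype.card F - 1)
      = Fintype.card F ^ (n - k + 1) - 1 := by
    intro B hB
    obtain ⟨hBrk, -⟩ := (hmem𝒟 B).mp hB
    have h := card_over (K := F) (V := Fin n → F) k hk (by rw [hV]; exact hkn) B hBrk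
    rw [natCard_subtype, hV] at h
    have hsplit : (Finset.univ.filter fun A : Submodule F (Fin n → F) =>
        B < A ∧ finrank F A = k) = dP B ∪ eP B := by
      ext A
      simp only [hdP, heP, Finset.mem_filter, Finset.mem_union, Finset.mem_univ, true_and]
      constructor
      · rintro ⟨h1, h2⟩
        by_cases hAS : A ∈ S
        · exact Or.inl ⟨hAS, h1⟩
        · exact Or.inr ⟨h2, hAS, h1⟩
      · rintro (⟨hAS, h1⟩ | ⟨h1, h2, h3⟩)
        · exact ⟨h1, hS A hAS⟩
        · exact ⟨h3, h1⟩
    have hdisj : Disjoint (dP B) (eP B) := by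
      rw [Finset.disjoint_left]
      intro A hA1 hA2
      simp only [hdP, heP, Finset.mem_filter] at hA1 hA2
      exact hA2.2.2.1 hA1.2.1
    rw [hsplit, Finset.card_union_of_disjoint hdisj] at h
    exact h
  set P' : Finset (Submodule F (Fin n → F) × Submodule F (Fin n → F)) :=
    Finset.univ.filter (fun p => p.1 ∈ S ∧ finrank F p.2 = k ∧ p.2 ∉ S ∧
      finrank F (p.1 ⊓ p.2 : Submodule F (Fin n → F)) = k - 1) with hP'
  have hEcard : Nat.card {p : Submodule F (Fin n → F) × Submodule F (Fin n → F) |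
        p.1 ∈ S ∧ Module.finrank F p.2 = k ∧ p.2 ∉ S ∧
        Module.finrank F ↥(p.1 ⊓ p.2) = k - 1} = P'.card := by
    rw [hP']
    exact natCard_subtype _
  have hfibmem : ∀ p ∈ P', p.1 ⊓ p.2 ∈ 𝒟 := by
    intro p hp
    rw [hP', Finset.mem_filter] at hp
    obtain ⟨-, h1, h2, h3, h4⟩ := hp
    rw [hmem𝒟]
    refine ⟨h4, p.1, h1, lt_of_le_of_ne inf_le_left fun hEq => ?_⟩
    have h6 : finrank F p.1 = k - 1 := hEq ▸ h4
    have h7 := hS p.1 h1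
    omega
  have hfib : ∀ B ∈ 𝒟, (P'.filter fun p => p.1 ⊓ p.2 = B) = (dP B) ×ˢ (eP B) := by
    intro B hB
    obtain ⟨hBrk, -⟩ := (hmem𝒟 B).mp hB
    ext p
    simp only [hP', hdP, heP, Finset.mem_filter, Finset.mem_product, Finset.mem_univ, true_and]
    constructor
    · rintro ⟨⟨h1, h2, h3, h4⟩, h5⟩
      have hle1 : B < p.1 := by
        refine lt_of_le_of_ne (h5 ▸ inf_le_left) fun hEq => ?_
        have h6 : finrank F p.1 = k - 1 := hEq ▸ hBrk
        have h7 := hS p.1 h1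
        omega
      have hle2 : B < p.2 := by
        refine lt_of_le_of_ne (h5 ▸ inf_le_right) fun hEq => ?_
        have h6 : finrank F p.2 = k - 1 := hEq ▸ hBrk
        omega
      exact ⟨⟨h1, hle1⟩, h2, h3, hle2⟩
    · rintro ⟨⟨h1, h2⟩, h3, h4, h5⟩
      have hne12 : p.1 ≠ p.2 := fun hEq => h4 (hEq ▸ h1)
      have hinf : p.1 ⊓ p.2 = B :=
        inf_eq_of_lt_lt hk (hS p.1 h1) h3 hne12 hBrk h2 h5
      exact ⟨⟨h1, h3, h4, by rw [hinf]; exact hBrk⟩, hinf⟩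
  have hE : P'.card = ∑ B ∈ 𝒟, (dP B).card * (eP B).card := by
    rw [Finset.card_eq_sum_card_fiberwise hfibmem]
    refine Finset.sum_congr rfl fun B hB => ?_
    rw [hfib B hB, Finset.card_product]
  set Q : Finset (Submodule F (Fin n → F) × Submodule F (Fin n → F)) :=
    Finset.univ.filter (fun p => p.1 ∈ S ∧ p.2 < p.1 ∧ finrank F p.2 = k - 1) with hQ
  have hQ1 : ∀ p ∈ Q, p.2 ∈ 𝒟 := by
    intro p hp
    rw [hQ, Finset.mem_filter] at hp
    exact (hmem𝒟 p.2).mpr ⟨hp.2.2.2, p.1, hp.2.1, hp.2.2.1⟩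
  have hQ2 : ∀ p ∈ Q, p.1 ∈ 𝒮 := by
    intro p hp
    rw [hQ, Finset.mem_filter] at hp
    exact (hmem𝒮 p.1).mpr hp.2.1
  have hQd : ∀ B ∈ 𝒟, (Q.filter fun p => p.2 = B).card = (dP B).card := by
    intro B hB
    obtain ⟨hBrk, -⟩ := (hmem𝒟 B).mp hB
    apply Finset.card_bij (fun p _ => p.1)
    · intro p hp
      simp only [hQ, Finset.mem_filter] at hp
      simp only [hdP, Finset.mem_filter, Finset.mem_univ, true_and]
      exact ⟨hp.1.2.1, hp.2 ▸ hp.1.2.2.1⟩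
    · intro p1 hp1 p2 hp2 hEq
      simp only [Finset.mem_filter] at hp1 hp2
      exact Prod.ext hEq (hp1.2.trans hp2.2.symm)
    · intro A hA
      simp only [hdP, Finset.mem_filter, Finset.mem_univ, true_and] at hA
      refine ⟨(A, B), ?_, rfl⟩
      rw [Finset.mem_filter, hQ, Finset.mem_filter]
      exact ⟨⟨Finset.mem_univ _, hA.1, hA.2, hBrk⟩, rfl⟩
  have hQc : ∀ A ∈ 𝒮, (Q.filter fun p => p.1 = A).card = (cP A).card := by
    intro A hA
    apply Finset.card_bij (fun p _ => p.2)
    · intro p hp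
      simp only [hQ, Finset.mem_filter] at hp
      simp only [hcP, Finset.mem_filter, Finset.mem_univ, true_and]
      exact ⟨hp.2 ▸ hp.1.2.2.1, hp.1.2.2.2⟩
    · intro p1 hp1 p2 hp2 hEq
      simp only [Finset.mem_filter] at hp1 hp2
      exact Prod.ext (hp1.2.trans hp2.2.symm) hEq
    · intro B hB
      simp only [hcP, Finset.mem_filter, Finset.mem_univ, true_and] at hB
      refine ⟨(A, B), ?_, rfl⟩
      rw [Finset.mem_filter, hQ, Finset.mem_filter]
      exact ⟨⟨Finset.mem_univ _, (hmem𝒮 A).mp hA, hB.1, hB.2⟩, rfl⟩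
  have hswap : ∑ B ∈ 𝒟, (dP B).card = ∑ A ∈ 𝒮, (cP A).card :=
    calc ∑ B ∈ 𝒟, (dP B).card = ∑ B ∈ 𝒟, (Q.filter fun p => p.2 = B).card :=
        Finset.sum_congr rfl fun B hB => (hQd B hB).symm
      _ = Q.card := (Finset.card_eq_sum_card_fiberwise hQ1).symm
      _ = ∑ A ∈ 𝒮, (Q.filter fun p => p.1 = A).card := Finset.card_eq_sum_card_fiberwise hQ2
      _ = ∑ A ∈ 𝒮, (cP A).card := Finset.sum_congr rfl hQc
  have hDne : 𝒟.Nonempty := by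
    obtain ⟨A0, hA0⟩ := hne
    have h := hc A0 ((hmem𝒮 A0).mpr hA0)
    have hpow : 2 ≤ Fintype.card F ^ k := le_trans hq2 (Nat.le_self_pow (by omega) _)
    have hcne : (cP A0).card ≠ 0 := by
      intro h0
      rw [h0, Nat.zero_mul] at h
      omega
    obtain ⟨B0, hB0⟩ := Finset.card_ne_zero.mp hcne
    simp only [hcP, Finset.mem_filter, Finset.mem_univ, true_and] at hB0
    exact ⟨B0, (hmem𝒟 B0).mpr ⟨hB0.2, A0, hA0, hB0.1⟩⟩
  have hq1R : (1:ℝ) < (Fintype.card F : ℝ) := by exact_mod_cast hq2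
  have hqsub : (0:ℝ) < (Fintype.card F : ℝ) - 1 := by linarith
  have hcastpow : ∀ m : ℕ, ((Fintype.card F ^ m - 1 : ℕ) : ℝ)
      = (Fintype.card F : ℝ) ^ m - 1 := by
    intro m
    have h1 : 1 ≤ Fintype.card F ^ m := Nat.one_le_pow _ _ (by omega)
    push_cast [h1]
    ring
  have hcast1 : ((Fintype.card F - 1 : ℕ) : ℝ) = (Fintype.card F : ℝ) - 1 := by
    have h1 : 1 ≤ Fintype.card F := by omega
    push_cast [h1]
    ring
  have hdeR : ∀ B ∈ 𝒟, ((dP B).card : ℝ) + ((eP B).card : ℝ) = bq (n - k + 1) := by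
    intro B hB
    have h := hde B hB
    have h' : (((dP B).card : ℝ) + ((eP B).card : ℝ)) * ((Fintype.card F:ℝ) - 1)
        = (Fintype.card F:ℝ) ^ (n-k+1) - 1 := by
      rw [← hcast1, ← hcastpow]
      exact_mod_cast congrArg (fun x : ℕ => (x:ℝ)) h
    rw [hbq, eq_div_iff (ne_of_gt hqsub)]
    exact h'
  have hcR : ∀ A ∈ 𝒮, ((cP A).card : ℝ) = bq k := by
    intro A hA
    have h := hc A hA
    have h' : ((cP A).card : ℝ) * ((Fintype.card F:ℝ) - 1)
        = (Fintype.card F:ℝ) ^ k - 1 := by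
      rw [← hcast1, ← hcastpow]
      exact_mod_cast congrArg (fun x : ℕ => (x:ℝ)) h
    rw [hbq, eq_div_iff (ne_of_gt hqsub)]
    exact h'
  have hsumdR : ∑ B ∈ 𝒟, ((dP B).card : ℝ) = bq k * (𝒮.card : ℝ) := by
    have h1 : ((∑ B ∈ 𝒟, (dP B).card : ℕ) : ℝ) = ((∑ A ∈ 𝒮, (cP A).card : ℕ) : ℝ) := by
      exact_mod_cast congrArg (fun x : ℕ => (x:ℝ)) hswap
    push_cast at h1
    rw [h1, Finset.sum_congr rfl hcR, Finset.sum_const, nsmul_eq_mul, mul_comm]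
  have hcardSnat : Nat.card S = 𝒮.card := natCard_subtype _
  have hcardDnat : Nat.card (shadow F n k S) = 𝒟.card := natCard_subtype _
  have hDpos : (0:ℝ) < (𝒟.card : ℝ) := by exact_mod_cast Finset.card_pos.mpr hDne
  rw [hEcard, hcardSnat, hcardDnat]
  have hCS : (∑ B ∈ 𝒟, ((dP B).card:ℝ))^2 ≤ (𝒟.card : ℝ) * ∑ B ∈ 𝒟, ((dP B).card:ℝ)^2 := by
    exact_mod_cast sq_sum_le_card_mul_sum_sq
  set N : ℝ := bq (n - k + 1) with hN
  set T : ℝ := bq k * (𝒮.card : ℝ) with hT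
  set D : ℝ := (𝒟.card : ℝ) with hD
  have hTD : T^2 / D ≤ ∑ B ∈ 𝒟, ((dP B).card:ℝ)^2 := by
    rw [div_le_iff₀ hDpos, ← hsumdR]
    calc (∑ B ∈ 𝒟, ((dP B).card:ℝ))^2 ≤ D * ∑ B ∈ 𝒟, ((dP B).card:ℝ)^2 := hCS
      _ = (∑ B ∈ 𝒟, ((dP B).card:ℝ)^2) * D := mul_comm _ _
  have hgoal : ((P'.card : ℕ) : ℝ) ≤ T * (N - T / D) :=
    calc ((P'.card : ℕ) : ℝ) = ∑ B ∈ 𝒟, (((dP B).card:ℝ) * ((eP B).card:ℝ)) := by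
          rw [hE]
          push_cast
          rfl
      _ = ∑ B ∈ 𝒟, (((dP B).card:ℝ) * N - ((dP B).card:ℝ)^2) := by
          refine Finset.sum_congr rfl fun B hB => ?_
          have hh := hdeR B hB
          have he : ((eP B).card:ℝ) = N - ((dP B).card:ℝ) := by linarith
          rw [he]
          ring
      _ = (∑ B ∈ 𝒟, ((dP B).card:ℝ)) * N - ∑ B ∈ 𝒟, ((dP B).card:ℝ)^2 := by
          rw [Finset.sum_sub_distrib, Finset.sum_mul]
      _ = T * N - ∑ B ∈ 𝒟, ((dP B).card:ℝ)^2 := by rw [hsumdR]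
      _ ≤ T * N - T^2 / D := by linarith
      _ = T * (N - T / D) := by rw [mul_sub, sq, mul_div_assoc]
  exact hgoal
end

section
/- (Sharp threshold for ideals) Let Q be an ideal in the lattice of subspaces of (F_q)^n and 1 ≤ k ≤ n−1. If μ_k(Q) = 1/(1+z) with z > 0, then μ_{k+1}(Q) ≤ 1/(1+qz). Consequently, for any integer c ≥ 1 with k+c ≤ n, μ_{k+c}(Q) ≤ 1/(1+q^c·z). -/
/-- Density at dimension k among k-dimensional subspaces. -/
noncomputable def mu (F : Type) [Field F] [Fintype F] (n k : ℕ)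
    (Q : Set (Submodule F (Fin n → F))) : ℝ :=
  (Nat.card {A : Submodule F (Fin n → F) | A ∈ Q ∧ Module.finrank F A = k} : ℝ) /
    (Nat.card {A : Submodule F (Fin n → F) | Module.finrank F A = k} : ℝ)

/-!
Write `[m]_q = 1 + q + ⋯ + q^(m-1)` (`qNat q m`), `L(V,j)` for the `j`-dimensional subspaces of
an `n`-dimensional space `V`, and for `f : L(V,j) → ℝ` let `U f (B) = ∑_{A ≤ B} f A` on
`L(V,j+1)` and `D f (C) = ∑_{C ≤ A} f A` on `L(V,j-1)`. Two distinct `j`-spaces have as many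
common `(j+1)`-superspaces as common `(j-1)`-subspaces (one if `dim (A ⊓ A') = j - 1`, none
otherwise), so `‖U f‖² - ‖D f‖² = ([n-j]_q - [j]_q) ‖f‖²`. Since `D` is adjoint to `U` one level
down, induction on `j` gives the spectral bound `‖U f‖² ≤ q [j]_q [n-j-1]_q ‖f‖²` for `f` of
mean zero.

Apply it to the centred indicator `f` of an ideal `Q` at level `j`. As `Q` is downward closed,
`U f` is constant on `Q ∩ L(V,j+1)`; since `U f` has mean zero, Cauchy–Schwarz on the complement
bounds `‖U f‖²` from below. Comparing both bounds (with `q · q [j]_q [n-j-1]_q ≤ [j+1]_q [n-j]_q`)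
gives `q μ_{j+1} (1 - μ_j) ≤ μ_j (1 - μ_{j+1})`, i.e. `μ_{j+1} ≤ 1/(1+qz)` when
`μ_j = 1/(1+z)`; iterating gives the factor `q^c`.
-/

open Module Finset

namespace SubspaceLattice

open scoped Classical

def qNat (q m : ℕ) : ℕ := ∑ i ∈ range m, q ^ i

@[simp]
lemma qNat_zero (q : ℕ) : qNat q 0 = 0 := rfl

lemma qNat_succ (q m : ℕ) : qNat q (m + 1) = 1 + q * qNat q m := by
  rw [qNat, qNat, geom_sum_succ, add_comm]

lemma qNat_succ_pos (q m : ℕ) : 0 < qNat q (m + 1) := by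
  rw [qNat_succ]
  omega

lemma qNat_mul_qNat_le (q j m : ℕ) :
    q * (q * qNat q j * qNat q m) ≤ qNat q (j + 1) * qNat q (m + 1) := by
  rw [qNat_succ, qNat_succ]
  nlinarith [Nat.zero_le (q * qNat q j), Nat.zero_le (q * qNat q m)]

lemma mul_one_add_mul_le_one {q β γ w : ℝ} (hq : 0 < q) (hβ : 0 ≤ β) (hγ : 0 ≤ γ)
    (hstep : q * γ * (1 - β) ≤ β * (1 - γ)) (hβw : β * (1 + w) ≤ 1) : γ * (1 + q * w) ≤ 1 := by
  rcases hβ.eq_or_lt with rfl | hβ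
  · obtain rfl : γ = 0 := le_antisymm (by nlinarith) hγ
    simp
  · refine le_of_mul_le_mul_left ?_ hβ
    nlinarith [mul_le_mul_of_nonneg_left hβw (mul_nonneg hq.le hγ)]

section DoubleCounting

variable {α β R : Type*} [CommSemiring R] (s : Finset α) (t : Finset β) (r : α → β → Prop)
  [∀ a b, Decidable (r a b)]

lemma sum_sum_filter_eq_sum_card_mul (f : α → R) :
    ∑ b ∈ t, ∑ a ∈ s with r a b, f a = ∑ a ∈ s, #{b ∈ t | r a b} * f a := by
  simp_rw [sum_filter, natCast_card_filter, sum_mul, ite_mul, one_mul, zero_mul]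
  exact sum_comm

lemma sum_sum_filter_mul_eq_sum_mul_sum_filter (f : α → R) (g : β → R) :
    ∑ b ∈ t, (∑ a ∈ s with r a b, f a) * g b = ∑ a ∈ s, f a * ∑ b ∈ t with r a b, g b := by
  simp_rw [sum_filter, sum_mul, mul_sum, ite_mul, mul_ite, zero_mul, mul_zero]
  exact sum_comm

lemma sum_sq_sum_filter (f : α → R) :
    ∑ b ∈ t, (∑ a ∈ s with r a b, f a) ^ 2
      = ∑ a ∈ s, ∑ a' ∈ s, f a * f a' * #{b ∈ t | r a b ∧ r a' b} := by
  simp_rw [sq, sum_filter, sum_mul_sum, natCast_card_filter, mul_sum]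
  rw [sum_comm]
  refine sum_congr rfl fun a _ => ?_
  rw [sum_comm]
  refine sum_congr rfl fun a' _ => sum_congr rfl fun b _ => ?_
  split_ifs <;> simp_all

end DoubleCounting

lemma card_filter_mul_sq_mul_card_le {ι : Type*} (s : Finset ι) (p : ι → Prop) [DecidablePred p]
    {g : ι → ℝ} {c : ℝ} (hg : ∑ i ∈ s, g i = 0) (hc : ∀ i ∈ s, p i → g i = c) :
    #{i ∈ s | p i} * c ^ 2 * #s ≤ #{i ∈ s | ¬p i} * ∑ i ∈ s, g i ^ 2 := by
  have hgc : ∀ i ∈ {i ∈ s | p i}, g i = c := fun i hi =>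
    hc i (mem_filter.1 hi).1 (mem_filter.1 hi).2
  have hsum := sum_filter_add_sum_filter_not s p g
  have hsum_sq := sum_filter_add_sum_filter_not s p (g · ^ 2)
  rw [sum_congr rfl hgc, sum_const, nsmul_eq_mul, hg] at hsum
  rw [sum_congr rfl fun i hi => (by rw [hgc i hi] : g i ^ 2 = c ^ 2), sum_const,
    nsmul_eq_mul] at hsum_sq
  have hCS := sq_sum_le_card_mul_sum_sq (s := {i ∈ s | ¬p i}) (f := g)
  rw [show ∑ i ∈ s with ¬p i, g i = -(#{i ∈ s | p i} * c) by linarith, neg_sq] at hCS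
  have hcard : (#{i ∈ s | p i} : ℝ) + #{i ∈ s | ¬p i} = #s := by
    exact_mod_cast card_filter_add_card_filter_not p
  rw [← hcard, ← hsum_sq]
  nlinarith

section Counting

variable {F : Type*} [Field F]

theorem ncard_finrank_eq_dual {W : Type*} [AddCommGroup W] [Module F W] [Module.Finite F W]
    {k l : ℕ} (h : k + l = finrank F W) :
    {U : Submodule F W | finrank F U = k}.ncard
      = {U : Submodule F (Dual F W) | finrank F U = l}.ncard := by
  rw [← Nat.card_coe_set_eq, ← Nat.card_coe_set_eq]
  refine Nat.card_congr
    (((Subspace.orderIsoFiniteDimensional (K := F) (V := W)).toEquiv.trans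
      OrderDual.ofDual).subtypeEquiv fun U => ?_)
  have := Subspace.finrank_add_finrank_dualAnnihilator_eq U
  change finrank F U = k ↔ finrank F U.dualAnnihilator = l
  omega

variable [Finite F]

theorem ncard_finrank_eq_one {W : Type*} [AddCommGroup W] [Module F W] :
    {L : Submodule F W | finrank F L = 1}.ncard = qNat (Nat.card F) (finrank F W) :=
  (Nat.card_congr (Projectivization.equivSubmodule F W)).symm.trans
    (Projectivization.card_of_finrank F W rfl)

theorem ncard_hyperplanes {W : Type*} [AddCommGroup W] [Module F W] [Module.Finite F W] {k : ℕ}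
    (h : k + 1 = finrank F W) :
    {U : Submodule F W | finrank F U = k}.ncard = qNat (Nat.card F) (k + 1) := by
  rw [ncard_finrank_eq_dual h, ncard_finrank_eq_one, Subspace.dual_finrank_eq, h]

end Counting

section Grassmannian

variable {F V : Type*} [Field F] [AddCommGroup V] [Module F V] [Finite V]

variable (F V) in
noncomputable def grass (j : ℕ) : Finset (Submodule F V) :=
  (Set.toFinite {W : Submodule F V | finrank F W = j}).toFinset

@[simp]
lemma mem_grass {j : ℕ} {W : Submodule F V} : W ∈ grass F V j ↔ finrank F W = j := by
  simp [grass]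

lemma card_filter_grass (j : ℕ) (p : Submodule F V → Prop) [DecidablePred p] :
    #{W ∈ grass F V j | p W} = {W : Submodule F V | finrank F W = j ∧ p W}.ncard := by
  rw [← Set.ncard_coe_finset]
  congr
  ext
  simp

lemma grass_zero : grass F V 0 = {⊥} := by
  ext W
  simp [Submodule.finrank_eq_zero]

lemma grass_nonempty {j : ℕ} (hj : j ≤ finrank F V) : (grass F V j).Nonempty := by
  obtain ⟨v, hv⟩ := exists_linearIndependent_of_le_finrank hj
  exact ⟨_, mem_grass.2 ((finrank_span_eq_card hv).trans (Fintype.card_fin j))⟩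

lemma finrank_comap_mkQ (A : Submodule F V) (L : Submodule F (V ⧸ A)) :
    finrank F (L.comap A.mkQ) = finrank F L + finrank F A := by
  have := LinearMap.finrank_range_add_finrank_ker (A.mkQ.domRestrict (L.comap A.mkQ))
  rwa [LinearMap.range_domRestrict, Submodule.map_comap_eq_of_surjective A.mkQ_surjective,
    LinearMap.ker_domRestrict, Submodule.ker_mkQ,
    (Submodule.comapSubtypeEquivOfLe (Submodule.le_comap_mkQ A L)).finrank_eq, eq_comm] at this

theorem card_superspaces [Finite F] {A : Submodule F V} {j m : ℕ} (hA : finrank F A = j)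
    (h : j + m = finrank F V) :
    #{B ∈ grass F V (j + 1) | A ≤ B} = qNat (Nat.card F) m := by
  have hquot : finrank F (V ⧸ A) = m := by
    have := A.finrank_quotient_add_finrank
    omega
  rw [card_filter_grass, ← hquot, ← ncard_finrank_eq_one, ← Set.ncard_image_of_injective _
    (Submodule.comap_injective_of_surjective A.mkQ_surjective)]
  congr 1
  ext B
  constructor
  · rintro ⟨hB, hAB⟩
    have hB' : (B.map A.mkQ).comap A.mkQ = B := by rw [Submodule.comap_map_mkQ, sup_eq_right.2 hAB]
    refine ⟨B.map A.mkQ, ?_, hB'⟩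
    have := finrank_comap_mkQ A (B.map A.mkQ)
    rw [hB'] at this
    change finrank F (B.map A.mkQ) = 1
    omega
  · rintro ⟨L, hL, rfl⟩
    exact ⟨by rw [finrank_comap_mkQ, hL, hA, add_comm], Submodule.le_comap_mkQ A L⟩

theorem card_subspaces [Finite F] {B : Submodule F V} {j : ℕ} (hB : finrank F B = j + 1) :
    #{C ∈ grass F V j | C ≤ B} = qNat (Nat.card F) (j + 1) := by
  rw [card_filter_grass, ← ncard_hyperplanes (W := B) hB.symm, ← Set.ncard_image_of_injective _
    (Submodule.map_injective_of_injective B.injective_subtype)]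
  congr 1
  ext C
  constructor
  · rintro ⟨hC, hCB⟩
    have hC' : (C.comap B.subtype).map B.subtype = C := by
      rw [Submodule.map_comap_subtype, inf_eq_right.2 hCB]
    refine ⟨C.comap B.subtype, ?_, hC'⟩
    change finrank F (C.comap B.subtype) = j
    rw [← Submodule.finrank_map_subtype_eq, hC', hC]
  · rintro ⟨U, hU, rfl⟩
    exact ⟨(Submodule.finrank_map_subtype_eq B U).trans hU, Submodule.map_subtype_le B U⟩

theorem card_grass_mul_qNat [Finite F] {j m : ℕ} (h : j + 1 + m = finrank F V) :
    #(grass F V j) * qNat (Nat.card F) (m + 1)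
      = #(grass F V (j + 1)) * qNat (Nat.card F) (j + 1) :=
  card_mul_eq_card_mul (fun A B => A ≤ B)
    (fun A hA => card_superspaces (mem_grass.1 hA) (by omega))
    (fun B hB => card_subspaces (mem_grass.1 hB))

lemma card_filter_grass_le_of_finrank_le {W : Submodule F V} {j : ℕ} (hW : finrank F W ≤ j) :
    #{C ∈ grass F V j | C ≤ W} = if finrank F W = j then 1 else 0 := by
  split_ifs with h
  · rw [card_eq_one]
    refine ⟨W, ext fun C => ?_⟩
    simp only [mem_filter, mem_grass, mem_singleton]
    constructor
    · rintro ⟨hC, hCW⟩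
      exact Submodule.eq_of_le_of_finrank_le hCW (by omega)
    · rintro rfl
      exact ⟨h, le_rfl⟩
  · rw [card_eq_zero, filter_eq_empty_iff]
    intro C hC hCW
    have := Submodule.finrank_mono hCW
    rw [mem_grass] at hC
    omega

lemma card_filter_grass_ge_of_le_finrank {W : Submodule F V} {j : ℕ} (hW : j ≤ finrank F W) :
    #{B ∈ grass F V j | W ≤ B} = if finrank F W = j then 1 else 0 := by
  split_ifs with h
  · rw [card_eq_one]
    refine ⟨W, ext fun B => ?_⟩
    simp only [mem_filter, mem_grass, mem_singleton]
    constructor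
    · rintro ⟨hB, hWB⟩
      exact (Submodule.eq_of_le_of_finrank_le hWB (by omega)).symm
    · rintro rfl
      exact ⟨h, le_rfl⟩
  · rw [card_eq_zero, filter_eq_empty_iff]
    intro B hB hWB
    have := Submodule.finrank_mono hWB
    rw [mem_grass] at hB
    omega

theorem card_common_superspaces_sub_card_common_subspaces [Finite F] {A A' : Submodule F V}
    {j m : ℕ} (hA : finrank F A = j + 1) (hA' : finrank F A' = j + 1)
    (h : j + 1 + m = finrank F V) :
    (#{B ∈ grass F V (j + 2) | A ≤ B ∧ A' ≤ B} : ℝ) - #{C ∈ grass F V j | C ≤ A ∧ C ≤ A'}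
      = if A = A' then (qNat (Nat.card F) m : ℝ) - qNat (Nat.card F) (j + 1) else 0 := by
  split_ifs with hAA'
  · subst hAA'
    simp only [and_self]
    rw [card_superspaces hA h, card_subspaces hA]
  have hlt : A < A ⊔ A' := by
    refine lt_of_le_of_ne le_sup_left fun hsup => hAA' ?_
    exact (Submodule.eq_of_le_of_finrank_le (hsup ▸ le_sup_right) (by omega)).symm
  have hsup := Submodule.finrank_lt_finrank_of_lt hlt
  have hsum := Submodule.finrank_sup_add_finrank_inf_eq A A'
  simp only [← sup_le_iff, ← le_inf_iff]
  rw [card_filter_grass_ge_of_le_finrank (by omega), card_filter_grass_le_of_finrank_le (by omega)]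
  split_ifs <;> first | omega | simp

variable (F V) in
noncomputable def density (Q : Set (Submodule F V)) (j : ℕ) : ℝ :=
  #{A ∈ grass F V j | A ∈ Q} / #(grass F V j)

lemma density_nonneg (Q : Set (Submodule F V)) (j : ℕ) : 0 ≤ density F V Q j := by
  unfold density
  positivity

end Grassmannian

section Operators

variable {F V : Type*} [Field F] [AddCommGroup V] [Module F V] [Finite V]

noncomputable def up (j : ℕ) (f : Submodule F V → ℝ) (B : Submodule F V) : ℝ :=
  ∑ A ∈ grass F V j with A ≤ B, f A

noncomputable def down (j : ℕ) (f : Submodule F V → ℝ) (C : Submodule F V) : ℝ :=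
  ∑ A ∈ grass F V j with C ≤ A, f A

lemma sum_down_mul (j : ℕ) (f g : Submodule F V → ℝ) :
    ∑ C ∈ grass F V j, down (j + 1) f C * g C = ∑ A ∈ grass F V (j + 1), f A * up j g A :=
  sum_sum_filter_mul_eq_sum_mul_sum_filter _ _ (fun A C => C ≤ A) f g

variable [Finite F]

lemma sum_up {j m : ℕ} (h : j + m = finrank F V) (f : Submodule F V → ℝ) :
    ∑ B ∈ grass F V (j + 1), up j f B = qNat (Nat.card F) m * ∑ A ∈ grass F V j, f A := by
  rw [mul_sum]
  refine (sum_sum_filter_eq_sum_card_mul _ _ (fun A B => A ≤ B) f).trans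
    (sum_congr rfl fun A hA => ?_)
  rw [card_superspaces (mem_grass.1 hA) h]

lemma sum_down (j : ℕ) (f : Submodule F V → ℝ) :
    ∑ C ∈ grass F V j, down (j + 1) f C
      = qNat (Nat.card F) (j + 1) * ∑ A ∈ grass F V (j + 1), f A := by
  rw [mul_sum]
  refine (sum_sum_filter_eq_sum_card_mul _ _ (fun A C => C ≤ A) f).trans
    (sum_congr rfl fun A hA => ?_)
  rw [card_subspaces (mem_grass.1 hA)]

theorem sum_sq_up_sub_sum_sq_down {j m : ℕ} (h : j + 1 + m = finrank F V)
    (f : Submodule F V → ℝ) :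
    ∑ B ∈ grass F V (j + 2), up (j + 1) f B ^ 2 - ∑ C ∈ grass F V j, down (j + 1) f C ^ 2
      = ((qNat (Nat.card F) m : ℝ) - qNat (Nat.card F) (j + 1))
          * ∑ A ∈ grass F V (j + 1), f A ^ 2 := by
  simp only [up, down]
  rw [sum_sq_sum_filter, sum_sq_sum_filter _ _ (fun A C => C ≤ A), ← sum_sub_distrib, mul_sum]
  refine sum_congr rfl fun A hA => ?_
  rw [← sum_sub_distrib]
  calc _ = ∑ A' ∈ grass F V (j + 1), f A * f A'
          * (if A = A' then (qNat (Nat.card F) m : ℝ) - qNat (Nat.card F) (j + 1) else 0) :=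
        sum_congr rfl fun A' hA' => by
          rw [← mul_sub, card_common_superspaces_sub_card_common_subspaces (mem_grass.1 hA)
            (mem_grass.1 hA') h]
    _ = _ := by
      simp only [mul_ite, mul_zero, sum_ite_eq, hA, ↓reduceIte]
      ring

theorem sum_sq_up_le (j m : ℕ) (h : j + m + 1 = finrank F V) (f : Submodule F V → ℝ)
    (hf : ∑ A ∈ grass F V j, f A = 0) :
    ∑ B ∈ grass F V (j + 1), up j f B ^ 2
      ≤ Nat.card F * qNat (Nat.card F) j * qNat (Nat.card F) m * ∑ A ∈ grass F V j, f A ^ 2 := by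
  induction j generalizing m f with
  | zero =>
    have hf0 : f ⊥ = 0 := by simpa [grass_zero] using hf
    simp [up, grass_zero, filter_singleton, hf0]
  | succ j ih =>
    set T := ∑ A ∈ grass F V (j + 1), f A ^ 2
    set g := down (j + 1) f
    set X := ∑ C ∈ grass F V j, g C ^ 2
    set c : ℝ := Nat.card F * qNat (Nat.card F) j * qNat (Nat.card F) (m + 1)
    have hX : X ≤ c * T := by
      have hXfg : X = ∑ A ∈ grass F V (j + 1), f A * up j g A := by
        rw [← sum_down_mul]
        exact sum_congr rfl fun C _ => sq (g C)
      have hIH := ih (m + 1) (by omega) g (by rw [sum_down, hf, mul_zero])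
      have hX2 : X ^ 2 ≤ T * (c * X) :=
        calc X ^ 2 = (∑ A ∈ grass F V (j + 1), f A * up j g A) ^ 2 := by rw [hXfg]
          _ ≤ T * ∑ A ∈ grass F V (j + 1), up j g A ^ 2 := sum_mul_sq_le_sq_mul_sq _ _ _
          _ ≤ T * (c * X) := mul_le_mul_of_nonneg_left hIH (sum_nonneg fun A _ => sq_nonneg _)
      rcases (show 0 ≤ X from sum_nonneg fun C _ => sq_nonneg (g C)).eq_or_lt with hX0 | hXpos
      · rw [← hX0]
        positivity
      · exact le_of_mul_le_mul_right (by linear_combination hX2) hXpos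
    have hc : c + qNat (Nat.card F) (m + 1) - qNat (Nat.card F) (j + 1)
        = Nat.card F * qNat (Nat.card F) (j + 1) * qNat (Nat.card F) m := by
      simp only [c, qNat_succ]
      push_cast
      ring
    rw [← hc]
    linear_combination sum_sq_up_sub_sum_sq_down (m := m + 1) (by omega) f + hX

end Operators

section Ideals

variable {F V : Type*} [Field F] [AddCommGroup V] [Module F V] [Finite V]

noncomputable def centeredIndicator (Q : Set (Submodule F V)) (j : ℕ) (A : Submodule F V) : ℝ :=
  #(grass F V j) * (if A ∈ Q then 1 else 0) - #{A ∈ grass F V j | A ∈ Q}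

lemma sum_centeredIndicator (Q : Set (Submodule F V)) (j : ℕ) :
    ∑ A ∈ grass F V j, centeredIndicator Q j A = 0 := by
  simp only [centeredIndicator]
  rw [sum_sub_distrib, ← mul_sum, ← natCast_card_filter, sum_const, nsmul_eq_mul]
  ring

lemma sum_sq_centeredIndicator (Q : Set (Submodule F V)) (j : ℕ) :
    ∑ A ∈ grass F V j, centeredIndicator Q j A ^ 2
      = #(grass F V j) * #{A ∈ grass F V j | A ∈ Q}
          * ((#(grass F V j) : ℝ) - #{A ∈ grass F V j | A ∈ Q}) := by
  have (A : Submodule F V) : centeredIndicator Q j A ^ 2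
      = #(grass F V j) * (#(grass F V j) - 2 * #{A ∈ grass F V j | A ∈ Q})
          * (if A ∈ Q then 1 else 0) + (#{A ∈ grass F V j | A ∈ Q} : ℝ) ^ 2 := by
    by_cases hA : A ∈ Q <;> simp only [centeredIndicator, hA, ↓reduceIte] <;> ring
  rw [sum_congr rfl fun A _ => this A, sum_add_distrib, ← mul_sum, ← natCast_card_filter,
    sum_const, nsmul_eq_mul]
  ring

variable [Finite F]

lemma up_centeredIndicator_of_mem {Q : Set (Submodule F V)} (hQ : IsLowerSet Q) {j : ℕ}
    {B : Submodule F V} (hB : finrank F B = j + 1) (hBQ : B ∈ Q) :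
    up j (centeredIndicator Q j) B
      = qNat (Nat.card F) (j + 1) * ((#(grass F V j) : ℝ) - #{A ∈ grass F V j | A ∈ Q}) := by
  have hQA : ∀ A ∈ {A ∈ grass F V j | A ≤ B}, centeredIndicator Q j A
      = (#(grass F V j) : ℝ) - #{A ∈ grass F V j | A ∈ Q} := fun A hA => by
    simp [centeredIndicator, hQ (mem_filter.1 hA).2 hBQ]
  rw [up, sum_congr rfl hQA, sum_const, card_subspaces hB, nsmul_eq_mul]

theorem card_mul_card_le_of_isLowerSet {Q : Set (Submodule F V)} (hQ : IsLowerSet Q) {j m : ℕ}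
    (h : j + 1 + m = finrank F V) :
    (Nat.card F : ℝ) * #{B ∈ grass F V (j + 1) | B ∈ Q}
        * (#(grass F V j) - #{A ∈ grass F V j | A ∈ Q})
      ≤ #{A ∈ grass F V j | A ∈ Q}
        * (#(grass F V (j + 1)) - #{B ∈ grass F V (j + 1) | B ∈ Q}) := by
  have hR : (#{B ∈ grass F V (j + 1) | B ∉ Q} : ℝ)
      = #(grass F V (j + 1)) - #{B ∈ grass F V (j + 1) | B ∈ Q} := by
    rw [eq_sub_iff_add_eq', ← Nat.cast_add, card_filter_add_card_filter_not]
  have hCS := card_filter_mul_sq_mul_card_le _ (· ∈ Q)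
    (by rw [sum_up (j := j) (m := m + 1) (by omega), sum_centeredIndicator, mul_zero])
    fun B hB hBQ => up_centeredIndicator_of_mem hQ (mem_grass.1 hB) hBQ
  have hspec := sum_sq_up_le j m (by omega) _ (sum_centeredIndicator Q j)
  have hflag : (#(grass F V (j + 1)) : ℝ) * qNat (Nat.card F) (j + 1)
      = #(grass F V j) * qNat (Nat.card F) (m + 1) := by
    exact_mod_cast (card_grass_mul_qNat h).symm
  have hqS : (Nat.card F : ℝ) * (Nat.card F * qNat (Nat.card F) j * qNat (Nat.card F) m)
      ≤ qNat (Nat.card F) (j + 1) * qNat (Nat.card F) (m + 1) := by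
    exact_mod_cast qNat_mul_qNat_le _ _ _
  have haN : (#{A ∈ grass F V j | A ∈ Q} : ℝ) ≤ #(grass F V j) := by
    exact_mod_cast card_filter_le _ _
  rw [hR] at hCS
  rw [sum_sq_centeredIndicator] at hspec
  set q : ℝ := (Nat.card F : ℝ)
  set N : ℝ := (#(grass F V j) : ℝ)
  set N' : ℝ := (#(grass F V (j + 1)) : ℝ)
  set a : ℝ := (#{A ∈ grass F V j | A ∈ Q} : ℝ)
  set b : ℝ := (#{B ∈ grass F V (j + 1) | B ∈ Q} : ℝ)
  set d : ℝ := (qNat (Nat.card F) (j + 1) : ℝ)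
  set D : ℝ := (qNat (Nat.card F) (m + 1) : ℝ)
  have hbN' : 0 ≤ N' - b := by rw [← hR]; positivity
  rcases haN.eq_or_lt with haN | haN
  · rw [haN, sub_self, mul_zero]
    positivity
  have hN : 0 < N := lt_of_le_of_lt (Nat.cast_nonneg _) haN
  have hpos : 0 < d * D * N * (N - a) := mul_pos (mul_pos (mul_pos
    (Nat.cast_pos.2 (qNat_succ_pos _ _)) (Nat.cast_pos.2 (qNat_succ_pos _ _))) hN) (sub_pos.2 haN)
  refine le_of_mul_le_mul_left ?_ hpos
  have h1 := mul_le_mul_of_nonneg_left (hCS.trans (mul_le_mul_of_nonneg_left hspec hbN'))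
    (show 0 ≤ q by positivity)
  have h2 := mul_le_mul_of_nonneg_right hqS
    (mul_nonneg hbN' (mul_nonneg (by positivity) (sub_nonneg.2 haN.le)) : 0 ≤ (N' - b) * (N * a * (N - a)))
  linear_combination h1 + h2 - (q * b * d * (N - a) ^ 2) * hflag

theorem card_mul_density_succ_mul_le {Q : Set (Submodule F V)} (hQ : IsLowerSet Q) {j : ℕ}
    (hj : j + 1 ≤ finrank F V) :
    Nat.card F * density F V Q (j + 1) * (1 - density F V Q j)
      ≤ density F V Q j * (1 - density F V Q (j + 1)) := by
  obtain ⟨m, hm⟩ : ∃ m, j + 1 + m = finrank F V := ⟨_, Nat.add_sub_of_le hj⟩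
  have hN : (0 : ℝ) < #(grass F V j) := by exact_mod_cast (grass_nonempty (by omega)).card_pos
  have hN' : (0 : ℝ) < #(grass F V (j + 1)) := by exact_mod_cast (grass_nonempty hj).card_pos
  have := card_mul_card_le_of_isLowerSet hQ hm
  unfold density
  field_simp
  linarith

theorem density_mul_le_of_isLowerSet {Q : Set (Submodule F V)} (hQ : IsLowerSet Q) {k : ℕ} {z : ℝ}
    (hk : density F V Q k * (1 + z) ≤ 1) {c : ℕ} (hc : k + c ≤ finrank F V) :
    density F V Q (k + c) * (1 + Nat.card F ^ c * z) ≤ 1 := by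
  induction c with
  | zero => simpa using hk
  | succ c ih =>
    rw [← add_assoc, pow_succ', mul_assoc]
    exact mul_one_add_mul_le_one (Nat.cast_pos.2 Nat.card_pos) (density_nonneg Q _)
      (density_nonneg Q _) (card_mul_density_succ_mul_le hQ (by omega)) (ih (by omega))

end Ideals

theorem mu_eq_density (F : Type) [Field F] [Fintype F] (n j : ℕ)
    (Q : Set (Submodule F (Fin n → F))) : mu F n j Q = density F (Fin n → F) Q j := by
  rw [mu, density, card_filter_grass, grass, ← Set.ncard_coe_finset, Set.Finite.coe_toFinset,
    Nat.card_coe_set_eq, Nat.card_coe_set_eq]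
  simp only [and_comm]

end SubspaceLattice

theorem sharp_threshold_general (F : Type) [Field F] [Fintype F] (n k : ℕ)
    (hkn : k + 1 ≤ n)
    (Q : Set (Submodule F (Fin n → F)))
    (hQ : ∀ A ∈ Q, ∀ B : Submodule F (Fin n → F), B ≤ A → B ∈ Q)
    (z : ℝ) (hz : 0 < z) (hmu : mu F n k Q = 1 / (1 + z)) :
    mu F n (k + 1) Q ≤ 1 / (1 + (Fintype.card F : ℝ) * z)
    ∧ ∀ c : ℕ, 1 ≤ c → k + c ≤ n →
        mu F n (k + c) Q ≤ 1 / (1 + (Fintype.card F : ℝ) ^ c * z) := by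
  have hk : SubspaceLattice.density F (Fin n → F) Q k * (1 + z) ≤ 1 := by
    rw [← SubspaceLattice.mu_eq_density, hmu, one_div, inv_mul_cancel₀ (by positivity)]
  have hbound (c : ℕ) (hc : k + c ≤ n) :
      mu F n (k + c) Q ≤ 1 / (1 + (Fintype.card F : ℝ) ^ c * z) := by
    rw [le_div_iff₀ (by positivity), SubspaceLattice.mu_eq_density, ← Nat.card_eq_fintype_card]
    exact SubspaceLattice.density_mul_le_of_isLowerSet (fun A B hBA hA => hQ A hA B hBA) hk
      (by rwa [finrank_fin_fun])
  exact ⟨by simpa using hbound 1 hkn, fun c _ => hbound c⟩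

/-- Sharp threshold for ideals: μ_k(Q) = 1/(1+z) implies μ_{k+1}(Q) ≤ 1/(1+qz),
and μ_{k+c}(Q) ≤ 1/(1+q^c·z) for 1 ≤ c with k + c ≤ n. -/
theorem sharp_threshold (F : Type) [Field F] [Fintype F] (n k : ℕ)
    (hk : 1 ≤ k) (hkn : k + 1 ≤ n)
    (Q : Set (Submodule F (Fin n → F)))
    (hQ : ∀ A ∈ Q, ∀ B : Submodule F (Fin n → F), B ≤ A → B ∈ Q)
    (z : ℝ) (hz : 0 < z) (hmu : mu F n k Q = 1 / (1 + z)) :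
    mu F n (k + 1) Q ≤ 1 / (1 + (Fintype.card F : ℝ) * z)
    ∧ ∀ c : ℕ, 1 ≤ c → k + c ≤ n →
        mu F n (k + c) Q ≤ 1 / (1 + (Fintype.card F : ℝ) ^ c * z) :=
  sharp_threshold_general F n k hkn Q hQ z hz hmu
end
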